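/- arXiv:1210.2597 — 4 statements merged into one kernel-verified Lean document; each statement's English description precedes it below -/
import Mathlib

section
/- Define g : ℝ × (0,∞) → ℝ by g(x,t) = (x² + t²)/(2t) if |x| ≤ t and g(x,t) = |x| if |x| ≥ t. Let u₀ : ℝ → ℝ be 1-Lipschitz. Then for every x ∈ ℝ and t > 0, inf_{y ∈ ℝ} ( u₀(y) + g(x − y, t) ) = inf_{y ∈ ℝ} ( u₀(y) + (x − y)²/(2t) + t/2 ); that is, in the inf-convolution formula for the viscosity solution, the kernel g(·,t) may be replaced by the quadratic Hopf–Lax kernel (x−y)²/(2t) + t/2. -/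
open Real Set

/-- Rost's hydrodynamic limit profile for TASEP with step initial condition:
`g(x,t) = (x²+t²)/(2t)` if `|x| ≤ t` and `g(x,t) = |x|` if `|x| ≥ t`. -/
noncomputable def rost (x t : ℝ) : ℝ := if |x| ≤ t then (x ^ 2 + t ^ 2) / (2 * t) else |x|

/-!
A 1-Lipschitz `u` is invariant under inf-convolution with `|·|`. The Rost profile is the
inf-convolution of `|·|` with the Hopf–Lax kernel `k(z) = z²/(2t) + t/2` (the infimum is attained
at `w = z` clamped to `[-t, t]`), so by associativity of inf-convolution
`u □ g(·,t) = u □ |·| □ k = u □ k`.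
-/

noncomputable def hopfLaxKernel (t z : ℝ) : ℝ := z ^ 2 / (2 * t) + t / 2

lemma LipschitzWith.le_add_abs_sub {u : ℝ → ℝ} (hu : LipschitzWith 1 u) (a b : ℝ) :
    u a ≤ u b + |a - b| := by
  simpa [Real.dist_eq] using hu.le_add_mul a b

theorem LipschitzWith.iInf_add_comp_sub_eq {u K L : ℝ → ℝ} (hu : LipschitzWith 1 u)
    (hK : ∀ z, |z| ≤ K z) (hLK : ∀ z, L z ≤ K z) (hKL : ∀ z, ∃ w, |z - w| + K w ≤ L z)
    (x : ℝ) : ⨅ y, (u y + L (x - y)) = ⨅ y, (u y + K (x - y)) := by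
  have bddK : BddBelow (range fun y => u y + K (x - y)) :=
    ⟨u x, forall_mem_range.2 fun y => by linarith [hu.le_add_abs_sub x y, hK (x - y)]⟩
  have bddL : BddBelow (range fun y => u y + L (x - y)) := by
    refine ⟨u x, forall_mem_range.2 fun y => ?_⟩
    obtain ⟨w, hw⟩ := hKL (x - y)
    have : |x - y| ≤ |x - y - w| + |w| := by simpa using abs_add_le (x - y - w) w
    linarith [hu.le_add_abs_sub x y, hK w]
  refine le_antisymm (le_ciInf fun y => (ciInf_le bddL y).trans (by linarith [hLK (x - y)]))
    (le_ciInf fun y => ?_)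
  obtain ⟨w, hw⟩ := hKL (x - y)
  calc ⨅ y, (u y + K (x - y)) ≤ u (x - w) + K w := by simpa using ciInf_le bddK (x - w)
    _ ≤ u y + |x - y - w| + K w := by
        have := hu.le_add_abs_sub (x - w) y
        rw [show x - w - y = x - y - w by ring] at this
        linarith
    _ ≤ u y + L (x - y) := by linarith

section Rost

variable {t : ℝ}

lemma abs_le_hopfLaxKernel (ht : 0 < t) (z : ℝ) : |z| ≤ hopfLaxKernel t z := by
  have : hopfLaxKernel t z - |z| = (|z| - t) ^ 2 / (2 * t) := by
    unfold hopfLaxKernel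
    field_simp
    rw [← sq_abs z]
    ring
  linarith [show 0 ≤ (|z| - t) ^ 2 / (2 * t) by positivity]

lemma hopfLaxKernel_self (ht : 0 < t) : hopfLaxKernel t t = t := by
  unfold hopfLaxKernel
  field_simp
  ring

lemma rost_eq_hopfLaxKernel (ht : 0 < t) {z : ℝ} (hz : |z| ≤ t) :
    rost z t = hopfLaxKernel t z := by
  rw [rost, if_pos hz, hopfLaxKernel]
  field_simp

lemma rost_eq_abs {z : ℝ} (hz : t < |z|) : rost z t = |z| :=
  if_neg hz.not_ge

lemma rost_le_hopfLaxKernel (ht : 0 < t) (z : ℝ) : rost z t ≤ hopfLaxKernel t z := by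
  rcases le_or_gt |z| t with hz | hz
  · exact (rost_eq_hopfLaxKernel ht hz).le
  · exact (rost_eq_abs hz).trans_le (abs_le_hopfLaxKernel ht z)

lemma exists_abs_sub_add_hopfLaxKernel_le_rost (ht : 0 < t) (z : ℝ) :
    ∃ w, |z - w| + hopfLaxKernel t w ≤ rost z t := by
  rcases le_or_gt |z| t with hz | hz
  · exact ⟨z, by simp [rost_eq_hopfLaxKernel ht hz]⟩
  rw [rost_eq_abs hz]
  rcases le_or_gt 0 z with hz₀ | hz₀
  · refine ⟨t, ?_⟩
    rw [abs_of_nonneg hz₀] at hz ⊢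
    rw [abs_of_pos (sub_pos.2 hz), hopfLaxKernel_self ht]
    linarith
  · refine ⟨-t, ?_⟩
    rw [abs_of_neg hz₀] at hz ⊢
    have : hopfLaxKernel t (-t) = t := by rw [hopfLaxKernel, neg_sq]; exact hopfLaxKernel_self ht
    rw [abs_of_neg (by linarith : z - -t < 0), this]
    linarith

end Rost

/-- for 1-Lipschitz `u₀`, in the inf-convolution formula the kernel `g(·,t)`
may be replaced by the quadratic Hopf–Lax kernel `(x−y)²/(2t) + t/2`. -/
theorem rost_infconv_eq_hopf_lax (u₀ : ℝ → ℝ) (hu₀ : LipschitzWith 1 u₀)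
    (x t : ℝ) (ht : 0 < t) :
    (⨅ y : ℝ, (u₀ y + rost (x - y) t)) = ⨅ y : ℝ, (u₀ y + (x - y) ^ 2 / (2 * t) + t / 2) := by
  simp only [add_assoc]
  exact hu₀.iInf_add_comp_sub_eq (L := fun z => rost z t) (abs_le_hopfLaxKernel ht)
    (rost_le_hopfLaxKernel ht) (exists_abs_sub_add_hopfLaxKernel_le_rost ht) x
end

section
/- Define g : ℝ × (0,∞) → ℝ by g(x,t) = (x² + t²)/(2t) if |x| ≤ t and g(x,t) = |x| if |x| ≥ t. Let u₀ : ℝ → ℝ be 1-Lipschitz and set u(x,t) := inf_{y ∈ ℝ} ( u₀(y) + g(x − y, t) ). Then the formula has the semigroup property: for all s, t > 0 and all x ∈ ℝ, u(x, s + t) = inf_{y ∈ ℝ} ( u(y, s) + g(x − y, t) ). In particular, taking u₀(x) = |x|, one has g(x, s + t) = inf_{y ∈ ℝ} ( g(y, s) + g(x − y, t) ). -/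
/-!
With `L v = (1 + v²)/2` for `|v| ≤ 1` and `L v = |v|` otherwise, `rost x t = t L(x/t)` is the
supremum over `|q| ≤ 1` of the affine functions `q x + t (1 - q²)/2`, and the supremum is attained.
Adding the affine minorants of `rost y s` and `rost (x - y) t` for the slope attaining
`rost x (s + t)` gives `rost x (s + t) ≤ rost y s + rost (x - y) t`, with equality at
`y = s x/(s + t)` by the homogeneity `rost (c x) (c t) = c rost x t`. So `rost (·) (s + t)` is the
inf-convolution of `rost (·) s` and `rost (·) t`, and the semigroup property of the Hopf–Lax
formula is the associativity of inf-convolution; `u₀ x ≤ u₀ y + |x - y| ≤ u₀ y + rost (x - y) t`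
keeps all infima finite.
-/

open Real Set

theorem rost_mul_mul {c : ℝ} (hc : 0 < c) (x t : ℝ) : rost (c * x) (c * t) = c * rost x t := by
  simp only [rost, abs_mul, abs_of_pos hc, mul_le_mul_iff_right₀ hc]
  split_ifs
  · rw [mul_div_assoc']
    rcases eq_or_ne t 0 with rfl | ht
    · simp
    · field_simp
  · rfl

theorem affine_le_rost {q : ℝ} (hq : |q| ≤ 1) (x : ℝ) {t : ℝ} (ht : 0 < t) :
    q * x + t * (1 - q ^ 2) / 2 ≤ rost x t := by
  rw [rost]
  split_ifs with hx
  · have key : (x ^ 2 + t ^ 2) / (2 * t) - (q * x + t * (1 - q ^ 2) / 2)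
        = (x - t * q) ^ 2 / (2 * t) := by
      field_simp
      ring
    linarith [show 0 ≤ (x - t * q) ^ 2 / (2 * t) by positivity]
  · have hqx : q * x ≤ |q| * |x| := by rw [← abs_mul]; exact le_abs_self _
    have hq2 : t * (1 - q ^ 2) / 2 ≤ (1 - |q|) * |x| := by
      nlinarith [sq_abs q, abs_nonneg q, mul_nonneg (sub_nonneg.2 hq) ht.le]
    nlinarith

theorem exists_rost_eq_affine (x : ℝ) {t : ℝ} (ht : 0 < t) :
    ∃ q, |q| ≤ 1 ∧ rost x t = q * x + t * (1 - q ^ 2) / 2 := by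
  by_cases hx : |x| ≤ t
  · refine ⟨x / t, ?_, ?_⟩
    · rwa [abs_div, abs_of_pos ht, div_le_one ht]
    · rw [rost, if_pos hx]
      field_simp
      ring
  · rw [rost, if_neg hx]
    rcases le_or_gt 0 x with h | h
    · exact ⟨1, by norm_num, by rw [abs_of_nonneg h]; ring⟩
    · exact ⟨-1, by norm_num, by rw [abs_of_neg h]; ring⟩

theorem rost_add_le {s t : ℝ} (hs : 0 < s) (ht : 0 < t) (x y : ℝ) :
    rost x (s + t) ≤ rost y s + rost (x - y) t := by
  obtain ⟨q, hq, hx⟩ := exists_rost_eq_affine x (add_pos hs ht)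
  have hy := affine_le_rost hq y hs
  have hxy := affine_le_rost hq (x - y) ht
  linarith

theorem isLeast_rost_add {s t : ℝ} (hs : 0 < s) (ht : 0 < t) (x : ℝ) :
    IsLeast (range fun y => rost y s + rost (x - y) t) (rost x (s + t)) := by
  refine ⟨⟨s / (s + t) * x, ?_⟩, ?_⟩
  · have hst : 0 < s + t := add_pos hs ht
    have hy : rost (s / (s + t) * x) s = s / (s + t) * rost x (s + t) := by
      rw [← rost_mul_mul (by positivity)]
      field_simp
    have hxy : rost (x - s / (s + t) * x) t = t / (s + t) * rost x (s + t) := by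
      rw [← rost_mul_mul (by positivity)]
      congr 1 <;> field_simp
      ring
    simp only [hy, hxy]
    field_simp
  · rintro _ ⟨y, rfl⟩
    exact rost_add_le hs ht x y

theorem abs_le_rost (x : ℝ) {t : ℝ} (ht : 0 < t) : |x| ≤ rost x t := by
  rw [rost]
  split_ifs
  · rw [le_div_iff₀ (by positivity)]
    nlinarith [sq_nonneg (|x| - t), sq_abs x]
  · rfl

theorem rost_add {s t : ℝ} (hs : 0 < s) (ht : 0 < t) (x : ℝ) :
    rost x (s + t) = ⨅ y, rost y s + rost (x - y) t :=
  (isLeast_rost_add hs ht x).csInf_eq.symm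

noncomputable def hopfLax (u₀ : ℝ → ℝ) (t x : ℝ) : ℝ := ⨅ y, u₀ y + rost (x - y) t

section HopfLax

variable {u₀ : ℝ → ℝ}

theorem LipschitzWith.le_add_rost (hu₀ : LipschitzWith 1 u₀) {t : ℝ} (ht : 0 < t) (x y : ℝ) :
    u₀ x ≤ u₀ y + rost (x - y) t := by
  have := hu₀.le_add_mul x y
  rw [NNReal.coe_one, one_mul, Real.dist_eq] at this
  linarith [abs_le_rost (x - y) ht]

theorem bddBelow_range_add_rost (hu₀ : LipschitzWith 1 u₀) {t : ℝ} (ht : 0 < t) (x : ℝ) :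
    BddBelow (range fun y => u₀ y + rost (x - y) t) :=
  ⟨u₀ x, by rintro _ ⟨y, rfl⟩; exact hu₀.le_add_rost ht x y⟩

theorem le_hopfLax (hu₀ : LipschitzWith 1 u₀) {t : ℝ} (ht : 0 < t) (x : ℝ) :
    u₀ x ≤ hopfLax u₀ t x :=
  le_ciInf (hu₀.le_add_rost ht x)

theorem hopfLax_le (hu₀ : LipschitzWith 1 u₀) {t : ℝ} (ht : 0 < t) (x y : ℝ) :
    hopfLax u₀ t x ≤ u₀ y + rost (x - y) t :=
  ciInf_le (bddBelow_range_add_rost hu₀ ht x) y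

theorem hopfLax_add (hu₀ : LipschitzWith 1 u₀) {s t : ℝ} (hs : 0 < s) (ht : 0 < t) (x : ℝ) :
    hopfLax u₀ (s + t) x = ⨅ y, hopfLax u₀ s y + rost (x - y) t := by
  have hbdd : BddBelow (range fun y => hopfLax u₀ s y + rost (x - y) t) :=
    ⟨u₀ x, by
      rintro _ ⟨y, rfl⟩
      linarith [le_hopfLax hu₀ hs y, hu₀.le_add_rost ht x y]⟩
  refine le_antisymm (le_ciInf fun y => le_ciInf_add fun z => ?_) (le_ciInf fun z => ?_)
  · calc hopfLax u₀ (s + t) x ≤ u₀ z + rost (x - z) (s + t) := hopfLax_le hu₀ (add_pos hs ht) x z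
      _ ≤ u₀ z + (rost (y - z) s + rost (x - y) t) := by
        gcongr
        simpa using rost_add_le hs ht (x - z) (y - z)
      _ = u₀ z + rost (y - z) s + rost (x - y) t := by ring
  · obtain ⟨⟨w, hw⟩, -⟩ := isLeast_rost_add hs ht (x - z)
    calc ⨅ y, hopfLax u₀ s y + rost (x - y) t ≤ hopfLax u₀ s (z + w) + rost (x - (z + w)) t :=
          ciInf_le hbdd (z + w)
      _ ≤ u₀ z + rost w s + rost (x - z - w) t := by
        rw [← sub_sub]
        gcongr
        simpa using hopfLax_le hu₀ hs (z + w) z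
      _ = u₀ z + rost (x - z) (s + t) := by rw [add_assoc, ← hw]

end HopfLax

/-- the inf-convolution formula `u(x,t) = inf_y ( u₀(y) + g(x−y,t) )` has the
semigroup property `u(x, s+t) = inf_y ( u(y,s) + g(x−y,t) )`; in particular, for
`u₀ = |·|`, `g(x, s+t) = inf_y ( g(y,s) + g(x−y,t) )`. -/
theorem rost_infconv_semigroup (u₀ : ℝ → ℝ) (hu₀ : LipschitzWith 1 u₀)
    (s t : ℝ) (hs : 0 < s) (ht : 0 < t) :
    (∀ x : ℝ,
      (⨅ y : ℝ, (u₀ y + rost (x - y) (s + t)))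
        = ⨅ y : ℝ, ((⨅ z : ℝ, (u₀ z + rost (y - z) s)) + rost (x - y) t)) ∧
    ∀ x : ℝ, rost x (s + t) = ⨅ y : ℝ, (rost y s + rost (x - y) t) :=
  ⟨hopfLax_add hu₀ hs ht, rost_add hs ht⟩
end

section
/- Let D(t) ⊂ ℝ² be defined as follows: with g(x,t) = (x²+t²)/(2t) for |x| ≤ t and g(x,t) = |x| for |x| ≥ t, with f₁ = (1/2, −1/2), f₂ = (1/2, 1/2), let D₁(t) = { x f₁ + y f₂ : x ∈ ℝ, y ≥ g(x,t) − 2 }, let Dᵢ(t) for i = 2,3,4 be the image of D₁(t) under rotation about the origin by angle (i−1)π/2, and let D(t) = ∩ᵢ₌₁⁴ Dᵢ(t). For t ∈ [1,4] set d(t) = 2√t − t. Then for every t ∈ [1,4], D(t) is inscribed in the square [−d(t), d(t)]²: one has D(t) ⊆ [−d(t), d(t)]², and sup{ p·e₁ : p ∈ D(t) } = −inf{ p·e₁ : p ∈ D(t) } = d(t), and the same holds for the second coordinate. -/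
open Real Set

/-- `f₁ = (e₁ − e₂)/2`. -/
noncomputable def fOne : ℝ × ℝ := (1/2, -1/2)

/-- `f₂ = (e₁ + e₂)/2`. -/
noncomputable def fTwo : ℝ × ℝ := (1/2, 1/2)

/-- Rotation of the plane about the origin by angle `π/2`. -/
def rotQuarter (p : ℝ × ℝ) : ℝ × ℝ := (-p.2, p.1)

/-- `D₁(t)`: the epigraph of `g(·,t) − 2` in the frame `(0, f₁, f₂)`. -/
noncomputable def dropletOne (t : ℝ) : Set (ℝ × ℝ) :=
  {p | ∃ x y : ℝ, rost x t - 2 ≤ y ∧ p = x • fOne + y • fTwo}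

/-- `D(t) = D₁(t) ∩ D₂(t) ∩ D₃(t) ∩ D₄(t)`, where `Dᵢ(t)` is the image of `D₁(t)` under
rotation by `(i−1)π/2` about the origin. -/
noncomputable def droplet (t : ℝ) : Set (ℝ × ℝ) :=
  dropletOne t ∩ (rotQuarter '' dropletOne t) ∩
    (rotQuarter '' (rotQuarter '' dropletOne t)) ∩
    (rotQuarter '' (rotQuarter '' (rotQuarter '' dropletOne t)))

/-- `d(t) = 2√t − t`. -/
noncomputable def dPole (t : ℝ) : ℝ := 2 * Real.sqrt t - t

/-!
In the coordinates `u = x - y`, `v = x + y` a point `(x, y)` lies in `D(t)` iff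
`g(u,t) + |v| ≤ 2` and `g(v,t) + |u| ≤ 2`. Write `t = s²` with `s ≥ 1`, so `d(t) = 2s - s²`.
As a function of `|r|`, `g(r,t) + |r|` lies above the line `2(|r| + t)/s - 2`, which touches it
at `|r| = d(t)` with value `2`. Adding the two constraints therefore gives
`|u| + |v| ≤ 4s - 2t = 2 d(t)`, i.e. `max(|x|, |y|) ≤ d(t)`; and for `t ≤ 4` the four points
`(±d(t), 0)`, `(0, ±d(t))` satisfy both constraints, with equality.
-/

lemma rost_neg (x t : ℝ) : rost (-x) t = rost x t := by
  simp only [rost, abs_neg, neg_sq]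

lemma mem_dropletOne_iff {t : ℝ} {p : ℝ × ℝ} :
    p ∈ dropletOne t ↔ rost (p.1 - p.2) t - 2 ≤ p.1 + p.2 := by
  have hframe (x y : ℝ) : x • fOne + y • fTwo = ((x + y) / 2, (y - x) / 2) := by
    ext <;> simp [fOne, fTwo] <;> ring
  constructor
  · rintro ⟨x, y, h, rfl⟩
    rw [hframe, show (x + y) / 2 - (y - x) / 2 = x by ring,
      show (x + y) / 2 + (y - x) / 2 = y by ring]
    exact h
  · intro h
    exact ⟨p.1 - p.2, p.1 + p.2, h, by rw [hframe]; ext <;> simp only <;> ring⟩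

lemma mem_image_rotQuarter_iff {S : Set (ℝ × ℝ)} {p : ℝ × ℝ} :
    p ∈ rotQuarter '' S ↔ (p.2, -p.1) ∈ S := by
  constructor
  · rintro ⟨q, hq, rfl⟩
    simpa [rotQuarter] using hq
  · intro h
    exact ⟨(p.2, -p.1), h, by simp [rotQuarter]⟩

lemma mem_droplet_iff {t : ℝ} {p : ℝ × ℝ} :
    p ∈ droplet t ↔
      rost (p.1 - p.2) t + |p.1 + p.2| ≤ 2 ∧ rost (p.1 + p.2) t + |p.1 - p.2| ≤ 2 := by
  simp only [droplet, mem_inter_iff, mem_image_rotQuarter_iff, mem_dropletOne_iff]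
  rw [show p.2 - -p.1 = p.1 + p.2 by ring, show -p.1 - -p.2 = -(p.1 - p.2) by ring,
    show -p.2 - - -p.1 = -(p.1 + p.2) by ring, rost_neg, rost_neg,
    ← le_sub_iff_add_le', ← le_sub_iff_add_le', abs_le, abs_le]
  constructor
  · rintro ⟨⟨⟨h₁, h₂⟩, h₃⟩, h₄⟩
    refine ⟨⟨?_, ?_⟩, ?_, ?_⟩ <;> linarith
  · rintro ⟨⟨h₁, h₂⟩, h₃, h₄⟩
    refine ⟨⟨⟨?_, ?_⟩, ?_⟩, ?_⟩ <;> linarith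

lemma dPole_sq {s : ℝ} (hs : 0 ≤ s) : dPole (s ^ 2) = 2 * s - s ^ 2 := by
  rw [dPole, sqrt_sq hs]

lemma rost_sq_tangent_bound {s : ℝ} (hs : 1 ≤ s) (x : ℝ) :
    2 * (|x| + s ^ 2) ≤ s * (rost x (s ^ 2) + |x| + 2) := by
  rw [rost]
  split_ifs with hx
  · have hsq : s * ((x ^ 2 + (s ^ 2) ^ 2) / (2 * s ^ 2) + |x| + 2) - 2 * (|x| + s ^ 2)
        = (|x| + s ^ 2 - 2 * s) ^ 2 / (2 * s) := by
      field_simp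
      linear_combination (sq_abs x).symm
    have : 0 ≤ (|x| + s ^ 2 - 2 * s) ^ 2 / (2 * s) := by positivity
    linarith
  · have hsx : s ≤ |x| := by nlinarith
    nlinarith [mul_nonneg (sub_nonneg.2 hsx) (sub_nonneg.2 hs)]

lemma abs_le_dPole_of_mem_droplet {t : ℝ} (ht : 1 ≤ t) {p : ℝ × ℝ} (hp : p ∈ droplet t) :
    |p.1| ≤ dPole t ∧ |p.2| ≤ dPole t := by
  obtain ⟨s, hs, rfl⟩ : ∃ s, 1 ≤ s ∧ t = s ^ 2 :=
    ⟨√t, one_le_sqrt.2 ht, (sq_sqrt (by linarith)).symm⟩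
  rw [dPole_sq (by linarith)]
  obtain ⟨hu, hv⟩ := mem_droplet_iff.1 hp
  have hsum : |p.1 + p.2| + |p.1 - p.2| ≤ 2 * (2 * s - s ^ 2) := by
    nlinarith [rost_sq_tangent_bound hs (p.1 + p.2), rost_sq_tangent_bound hs (p.1 - p.2)]
  constructor <;> rw [abs_le] <;> constructor <;>
    linarith [le_abs_self (p.1 + p.2), neg_abs_le (p.1 + p.2),
      le_abs_self (p.1 - p.2), neg_abs_le (p.1 - p.2)]

lemma rost_dPole_add_abs_dPole {t : ℝ} (ht : t ∈ Icc (1 : ℝ) 4) :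
    rost (dPole t) t + |dPole t| = 2 := by
  obtain ⟨s, ⟨hs₁, hs₂⟩, rfl⟩ : ∃ s ∈ Icc (1 : ℝ) 2, t = s ^ 2 :=
    ⟨√t, ⟨one_le_sqrt.2 ht.1, (sqrt_le_left zero_le_two).2 (by linarith [ht.2])⟩,
      (sq_sqrt (by linarith [ht.1])).symm⟩
  rw [dPole_sq (by linarith)]
  have hd : |2 * s - s ^ 2| = 2 * s - s ^ 2 := abs_of_nonneg (by nlinarith)
  rw [rost, hd, if_pos (by nlinarith)]
  field_simp
  ring

lemma mem_droplet_of_rost_add_abs_le {t a : ℝ} (ha : rost a t + |a| ≤ 2) :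
    (a, 0) ∈ droplet t ∧ (0, a) ∈ droplet t := by
  constructor <;> rw [mem_droplet_iff] <;> simpa [rost_neg] using ha

lemma isLUB_isGLB_image_of_abs_le {α : Type*} {f : α → ℝ} {s : Set α} {d : ℝ}
    (hle : ∀ p ∈ s, |f p| ≤ d) (hmax : d ∈ f '' s) (hmin : -d ∈ f '' s) :
    IsLUB (f '' s) d ∧ IsGLB (f '' s) (-d) :=
  ⟨IsGreatest.isLUB ⟨hmax, forall_mem_image.2 fun p hp => (abs_le.1 (hle p hp)).2⟩,
    IsLeast.isGLB ⟨hmin, forall_mem_image.2 fun p hp => (abs_le.1 (hle p hp)).1⟩⟩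

/-- for `t ∈ [1,4]`, `D(t)` is inscribed in the square `[−d(t), d(t)]²`:
`D(t) ⊆ [−d(t), d(t)]²` and the sup/inf of each coordinate over `D(t)` are exactly `±d(t)`. -/
theorem droplet_inscribed (t : ℝ) (ht : t ∈ Icc (1:ℝ) 4) :
    droplet t ⊆ Icc (-dPole t, -dPole t) (dPole t, dPole t) ∧
    IsLUB ((fun p : ℝ × ℝ => p.1) '' droplet t) (dPole t) ∧
    IsGLB ((fun p : ℝ × ℝ => p.1) '' droplet t) (-dPole t) ∧
    IsLUB ((fun p : ℝ × ℝ => p.2) '' droplet t) (dPole t) ∧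
    IsGLB ((fun p : ℝ × ℝ => p.2) '' droplet t) (-dPole t) := by
  have hbound := fun p (hp : p ∈ droplet t) => abs_le_dPole_of_mem_droplet ht.1 hp
  have hpole := rost_dPole_add_abs_dPole ht
  obtain ⟨hpos₁, hpos₂⟩ := mem_droplet_of_rost_add_abs_le hpole.le
  obtain ⟨hneg₁, hneg₂⟩ :=
    mem_droplet_of_rost_add_abs_le (a := -dPole t) (by rw [rost_neg, abs_neg, hpole])
  obtain ⟨hlub₁, hglb₁⟩ := isLUB_isGLB_image_of_abs_le (f := fun p : ℝ × ℝ => p.1)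
    (fun p hp => (hbound p hp).1) ⟨_, hpos₁, rfl⟩ ⟨_, hneg₁, rfl⟩
  obtain ⟨hlub₂, hglb₂⟩ := isLUB_isGLB_image_of_abs_le (f := fun p : ℝ × ℝ => p.2)
    (fun p hp => (hbound p hp).2) ⟨_, hpos₂, rfl⟩ ⟨_, hneg₂, rfl⟩
  refine ⟨fun p hp => ?_, hlub₁, hglb₁, hlub₂, hglb₂⟩
  obtain ⟨h₁, h₂⟩ := hbound p hp
  exact ⟨⟨(abs_le.1 h₁).1, (abs_le.1 h₂).1⟩, (abs_le.1 h₁).2, (abs_le.1 h₂).2⟩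
end

section
/- Let g(x,t) = (x²+t²)/(2t) for |x| ≤ t and g(x,t) = |x| for |x| ≥ t, let t ∈ [1,4), d(t) = 2√t − t, let 0 < δ ≤ d(t), and define ḡ(x,t) = g(x,t) − 2 for |x| ≤ d(t) − δ and ḡ(x,t) = |x| − (d(t)−δ) + g(d(t)−δ, t) − 2 for |x| ≥ d(t) − δ. Then the equation ḡ(x,t) = −x has a unique solution x = r(t) in ℝ, given explicitly by r(t) = ( (d(t) − δ) + 2 − g(d(t)−δ, t) )/2, and it satisfies d(t) − δ/2 < r(t) < d(t). -/
open Real Set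

/-- The modified (pole-flattened) profile `ḡ(x,t)`: equal to `g(x,t) − 2` for
`|x| ≤ d(t) − δ`, extended with slopes `±1` outside. -/
noncomputable def rostBar (δ x t : ℝ) : ℝ :=
  if |x| ≤ dPole t - δ then rost x t - 2
  else |x| - (dPole t - δ) + rost (dPole t - δ) t - 2

/-- `r(t) = ((d(t) − δ) + 2 − g(d(t)−δ, t))/2`. -/
noncomputable def rPole (δ t : ℝ) : ℝ := ((dPole t - δ) + 2 - rost (dPole t - δ) t) / 2

set_option maxHeartbeats 1000000 in
/-- the equation `ḡ(x,t) = −x` has the unique solution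
`x = r(t) = ((d(t)−δ) + 2 − g(d(t)−δ,t))/2`, which satisfies `d(t) − δ/2 < r(t) < d(t)`. -/
theorem rostBar_eq_neg_unique (t δ : ℝ) (ht : t ∈ Ico (1:ℝ) 4) (hδ : 0 < δ)
    (hδd : δ ≤ dPole t) :
    rostBar δ (rPole δ t) t = -(rPole δ t) ∧
    (∀ x : ℝ, rostBar δ x t = -x → x = rPole δ t) ∧
    dPole t - δ/2 < rPole δ t ∧ rPole δ t < dPole t := by
  obtain ⟨ht1, ht4⟩ := ht
  have ht0 : (0:ℝ) < t := by linarith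
  have h2t : (2*t : ℝ) ≠ 0 := by positivity
  have hu0 : 0 ≤ Real.sqrt t := Real.sqrt_nonneg t
  have hu2 : Real.sqrt t ^ 2 = t := Real.sq_sqrt ht0.le
  have hu1 : 1 ≤ Real.sqrt t := by nlinarith
  have hu4 : Real.sqrt t < 2 := by nlinarith
  set u := Real.sqrt t with hu
  have hd : dPole t = 2*u - t := rfl
  have hd0 : 0 < dPole t := by rw [hd]; nlinarith
  have hd1 : dPole t ≤ 1 := by rw [hd]; nlinarith
  have hdt : dPole t ≤ t := by rw [hd]; nlinarith
  set s := dPole t - δ with hs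
  have hs0 : 0 ≤ s := by linarith
  have hsd : s < dPole t := by linarith
  have habs_s : |s| ≤ t := by rw [abs_of_nonneg hs0]; linarith
  set G := (s^2 + t^2)/(2*t) with hG
  have hgs : rost s t = G := by rw [rost, if_pos habs_s]
  have hGs : G * (2*t) = s^2 + t^2 := div_mul_cancel₀ _ h2t
  -- (s+t)^2 < 4t hence G + s < 2
  have hkey : s + t < 2*u := by rw [hd] at hsd; linarith
  have hg_lt : G + s < 2 := by nlinarith [hGs]
  -- 2t(2 - d) = d^2 + t^2
  have hgd : 2*t*(2 - dPole t) = (dPole t)^2 + t^2 := by rw [hd, ← hu2]; ring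
  have hrval : rPole δ t = (s + 2 - G)/2 := by rw [rPole, ← hs, hgs]
  have hrs : s < rPole δ t := by rw [hrval]; linarith
  have hr0 : 0 < rPole δ t := lt_of_le_of_lt hs0 hrs
  have habs_r : ¬ |rPole δ t| ≤ s := by rw [abs_of_pos hr0]; linarith
  refine ⟨?_, ?_, ?_, ?_⟩
  · rw [rostBar, ← hs, if_neg habs_r, hgs, abs_of_pos hr0, hrval]; ring
  · intro x hx
    rw [rostBar, ← hs] at hx
    by_cases hc : |x| ≤ s
    · rw [if_pos hc] at hx
      have habs_x : |x| ≤ t := le_trans hc (by linarith)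
      rw [rost, if_pos habs_x] at hx
      have hx2 : (x^2 + t^2)/(2*t) = 2 - x := by linarith
      have hx' : x^2 + t^2 = (2 - x)*(2*t) := (div_eq_iff h2t).mp hx2
      have hfac : (x + t - 2*u)*(x + t + 2*u) = 0 := by linear_combination hx' - 4*hu2
      obtain ⟨hxl, hxr⟩ := abs_le.mp hc
      rcases mul_eq_zero.mp hfac with h | h
      · exfalso; rw [hd] at hsd; linarith
      · exfalso; linarith
    · rw [if_neg hc, hgs] at hx
      by_cases hx0 : 0 ≤ x
      · rw [abs_of_nonneg hx0] at hx
        rw [hrval]; linarith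
      · rw [abs_of_neg (lt_of_not_ge hx0)] at hx
        exfalso; linarith
  · rw [hrval]
    have hsq : s^2 < (dPole t)^2 := by nlinarith
    have hlin2 : 2*t*(2 - dPole t - G) = (dPole t)^2 - s^2 := by
      linear_combination hgd - hGs
    have hpos2 : 0 < 2 - dPole t - G := by
      rcases lt_trichotomy (2 - dPole t - G) 0 with h | h | h
      · exfalso; nlinarith [hlin2, ht0, hsq]
      · rw [h, mul_zero] at hlin2; linarith
      · exact h
    linarith
  · rw [hrval]
    have hP : 0 < (dPole t - s)*(2*t - dPole t - s) := by
      apply mul_pos <;> linarith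
    have hlin : 2*t*(2*dPole t - s - 2 + G) = (dPole t - s)*(2*t - dPole t - s) := by
      linear_combination hGs - hgd
    have hpos : 0 < 2*dPole t - s - 2 + G := by
      rcases lt_trichotomy (2*dPole t - s - 2 + G) 0 with h | h | h
      · nlinarith [hP, hlin, ht0]
      · rw [h, mul_zero] at hlin; linarith [hP, hlin.symm]
      · exact h
    linarith
end
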